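/- Let X be a state space, X̃ a subspace with projection Proj: X → X̃, and suppose every region p_i ∈ P satisfies p_i ⊆ X̃. Suppose the simplified system can realize, from the same initial mean and covariance, any projected mean trajectory of the full system with pointwise smaller-or-equal covariance (Loewner order). Under Assumption 1 (for reach propositions with α < 0.5 and avoid propositions with α > 0.5), every label true (respectively every avoid-label false) along the full-system belief trajectory is also true (respectively false) along the simplified-system trajectory, hence any word satisfying φ generated by the full system is also generated by the simplified system, i.e., the simplified model is admissible. -/
import Mathlib

open Matrix

/-- Lemma 1 (admissibility of SBA-SiMBA), abstractly: if along the same mean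
trajectory the simplified model realizes pointwise smaller covariances
(Loewner order), then under Assumption 1 every reach-label true for the full
system stays true for the simplified system and every avoid-label false for
the full system stays false for the simplified system; hence for any
acceptance condition monotone with respect to this label refinement, a word
of the full system satisfying the task is also generated (in the accepted
sense) by the simplified system. -/
theorem simplified_model_admissible {n : ℕ} {AP : Type*}
    (reach avoid : Set AP)
    (sat : AP → (Fin n → ℝ) → Matrix (Fin n) (Fin n) ℝ → Prop)
    -- Assumption 1: reach propositions (α < 0.5) survive covariance decrease
    (hreach : ∀ p ∈ reach, ∀ (x : Fin n → ℝ) (S1 S2 : Matrix (Fin n) (Fin n) ℝ),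
      (S2 - S1).PosSemidef → sat p x S2 → sat p x S1)
    -- Assumption 1: avoid propositions (α > 0.5) stay false under covariance decrease
    (havoid : ∀ p ∈ avoid, ∀ (x : Fin n → ℝ) (S1 S2 : Matrix (Fin n) (Fin n) ℝ),
      (S2 - S1).PosSemidef → ¬ sat p x S2 → ¬ sat p x S1)
    (mean : ℕ → Fin n → ℝ)
    (Sfull Ssimp : ℕ → Matrix (Fin n) (Fin n) ℝ)
    -- the simplified model under-approximates the covariance at every step
    (hcov : ∀ k, (Sfull k - Ssimp k).PosSemidef)
    (Lfull Lsimp : ℕ → Set AP)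
    (hLfull : ∀ k, Lfull k = {p | sat p (mean k) (Sfull k)})
    (hLsimp : ∀ k, Lsimp k = {p | sat p (mean k) (Ssimp k)})
    -- acceptance of the specification, monotone in the label refinement
    (Acc : (ℕ → Set AP) → Prop)
    (hmono : ∀ σ σ' : ℕ → Set AP,
      (∀ k, σ k ∩ reach ⊆ σ' k ∧ σ' k ∩ avoid ⊆ σ k) → Acc σ → Acc σ') :
    (∀ k, Lfull k ∩ reach ⊆ Lsimp k ∧ Lsimp k ∩ avoid ⊆ Lfull k) ∧
    (Acc Lfull → Acc Lsimp) := by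
  have key : ∀ k, Lfull k ∩ reach ⊆ Lsimp k ∧ Lsimp k ∩ avoid ⊆ Lfull k := by
    intro k
    constructor
    · rintro p ⟨hp, hpr⟩
      rw [hLfull k] at hp
      rw [hLsimp k]
      exact hreach p hpr (mean k) (Ssimp k) (Sfull k) (hcov k) hp
    · rintro p ⟨hp, hpa⟩
      rw [hLsimp k] at hp
      rw [hLfull k]
      by_contra hfull
      exact havoid p hpa (mean k) (Ssimp k) (Sfull k) (hcov k) hfull hp
  exact ⟨key, hmono _ _ key⟩
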